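/- arXiv:1506.05734 — 2 statements merged into one kernel-verified Lean document; each statement's English description precedes it below -/
import Mathlib

section
/- Let A = (Q_{2^{s_n}})^{i_n}(Q_{2^{s_{n−1}}})^{i_{n−1}}⋯(Q_{2^{s_1}})^{i_1} be an A-polynomial. With the conventions s_0 := −1, i_{n+1} := 2, and 0^0 := 1, set c_k = (i_k − 1)^{s_k − s_{k−1} − 1} for 1 ≤ k ≤ n and c = ∏_{k=1}^n c_k. Then ∫ A dμ = c · ∏_{k=1}^n ||Q_{2^{s_k}}||^{2(i_{k+1} − 1)}. -/
/-!
Write `T_s = P_{2^s} + r_s/2`, so that `ν_s` is uniform on the zeros of `T_s`, and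
`T_{s+1} = T_s² - τ_s` with `τ_s = r_s²/4 - r_{s+1}/2`. The level set `{T_{t+1} = y}` is then the
union of the level sets `{T_t = ±a}`, `a² = y + τ_t`, so the mean of a polynomial over the former
is the average of its means over the latter. If at some level `t` that mean is affine in the level,
`c + d z`, the averaging kills `d`: at all higher levels the mean is `c`, hence `∫ p dμ = c`.
Multiplying `p` by `T_t` or `T_t²` gives an affine mean at level `t + 1` with slope `d` or `c`.
Polynomials of degree `< 2^s` have constant means at level `s` (divide by `T_{s-1}`), so `T_s` is
orthogonal to them; thus `Q_{2^s} = T_s` and `‖Q_{2^s}‖² = τ_s`, and multiplying in the factors of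
an A-polynomial from the bottom computes its integral.
-/

open Polynomial MeasureTheory Filter

/-- `r γ s` : the recursively defined scales `r 0 = 1`, `r (s+1) = γ (s+1) * (r s)²`. -/
noncomputable def r (γ : ℕ → ℝ) : ℕ → ℝ
  | 0 => 1
  | s + 1 => γ (s + 1) * (r γ s) ^ 2

/-- `P γ s` : the polynomial `P_{2^s}`, with `P_1 = X - 1` and
`P_{2^{s+1}} = P_{2^s} · (P_{2^s} + r_s)`. -/
noncomputable def P (γ : ℕ → ℝ) : ℕ → Polynomial ℝ
  | 0 => X - 1
  | s + 1 => P γ s * (P γ s + C (r γ s))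

/-- The integral `∫ f dν_s` of a function `f` against the normalized counting measure `ν_s`
on the `2^s` (simple, real) zeros of `P_{2^s} + r_s/2`. -/
noncomputable def nuInt (γ : ℕ → ℝ) (s : ℕ) (f : ℝ → ℝ) : ℝ :=
  (((P γ s + C (r γ s / 2)).roots.map f).sum) / 2 ^ s

namespace KGamma

noncomputable def T (γ : ℕ → ℝ) (s : ℕ) : ℝ[X] := P γ s + C (r γ s / 2)

noncomputable def tau (γ : ℕ → ℝ) (s : ℕ) : ℝ := r γ s ^ 2 / 4 - r γ (s + 1) / 2

noncomputable def rootMean (γ : ℕ → ℝ) (t : ℕ) (z : ℝ) (p : ℝ[X]) : ℝ :=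
  ((T γ t - C z).roots.map p.eval).sum / 2 ^ t

def AffineOn (γ : ℕ → ℝ) (t : ℕ) (p : ℝ[X]) (c d : ℝ) : Prop :=
  ∀ z, |z| ≤ r γ t / 2 → rootMean γ t z p = c + d * z

section Polynomials

variable (γ : ℕ → ℝ)

lemma P_monic_and_natDegree (s : ℕ) : (P γ s).Monic ∧ (P γ s).natDegree = 2 ^ s := by
  induction s with
  | zero =>
    rw [P, ← C_1]
    exact ⟨monic_X_sub_C 1, natDegree_X_sub_C 1⟩
  | succ s ih =>
    obtain ⟨hmonic, hdeg⟩ := ih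
    have hmonic' : (P γ s + C (r γ s)).Monic :=
      hmonic.add_of_left (degree_C_le.trans_lt (natDegree_pos_iff_degree_pos.mp (by
        rw [hdeg]; positivity)))
    refine ⟨hmonic.mul hmonic', ?_⟩
    rw [P, hmonic.natDegree_mul hmonic', natDegree_add_C, hdeg, pow_succ]
    ring

lemma T_natDegree (s : ℕ) : (T γ s).natDegree = 2 ^ s := by
  rw [T, natDegree_add_C, (P_monic_and_natDegree γ s).2]

lemma T_monic (s : ℕ) : (T γ s).Monic :=
  (P_monic_and_natDegree γ s).1.add_of_left (degree_C_le.trans_lt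
    (natDegree_pos_iff_degree_pos.mp (by rw [(P_monic_and_natDegree γ s).2]; positivity)))

lemma T_sub_C_monic (s : ℕ) (z : ℝ) : (T γ s - C z).Monic :=
  (T_monic γ s).sub_of_left (degree_C_le.trans_lt
    (natDegree_pos_iff_degree_pos.mp (by rw [T_natDegree]; positivity)))

lemma T_zero_sub_C (z : ℝ) : T γ 0 - C z = X - C (z + 1 / 2) := by
  have half : (1 : ℝ[X]) = C (1 / 2) + C (1 / 2) := by rw [← C_add, ← C_1]; norm_num
  simp only [T, P, r, C_add]
  linear_combination -half

lemma T_succ (s : ℕ) : T γ (s + 1) = T γ s ^ 2 - C (tau γ s) := by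
  have double : C (r γ s) = C (r γ s / 2) + C (r γ s / 2) := by rw [← C_add]; ring_nf
  have square : C (r γ s / 2) ^ 2 = C (tau γ s) + C (r γ (s + 1) / 2) := by
    rw [← C_pow, ← C_add, tau]; ring_nf
  rw [T, T, P]
  linear_combination P γ s * double - square

end Polynomials

def Admissible (γ : ℕ → ℝ) : Prop := ∀ s : ℕ, 0 < γ (s + 1) ∧ γ (s + 1) < 1 / 4

def TendstoInMoments (γ : ℕ → ℝ) (μ : Measure ℝ) : Prop :=
  ∀ p : ℝ[X], Tendsto (fun s => nuInt γ s (fun x => p.eval x)) atTop (nhds (∫ x, p.eval x ∂μ))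

section RootMean

variable {γ : ℕ → ℝ} {t : ℕ} {p q : ℝ[X]} {c d c' d' : ℝ}

lemma r_pos (hγ : Admissible γ) (s : ℕ) : 0 < r γ s := by
  induction s with
  | zero => norm_num [r]
  | succ s ih => exact mul_pos (hγ s).1 (pow_pos ih 2)

/-- The bound `γ < 1/4` keeps `a` real and in the range where the splitting can be iterated. -/
lemma roots_T_succ_sub_C (hγ : Admissible γ) {y : ℝ} (hy : |y| ≤ r γ (t + 1) / 2) :
    ∃ a, |a| ≤ r γ t / 2 ∧ a ^ 2 = y + tau γ t ∧
      (T γ (t + 1) - C y).roots = (T γ t - C a).roots + (T γ t - C (-a)).roots := by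
  have hr := r_pos hγ t
  obtain ⟨hγ₀, hγ₁⟩ := hγ t
  obtain ⟨hy₀, hy₁⟩ := abs_le.mp hy
  simp only [r] at hy₀ hy₁
  have hnonneg : 0 ≤ y + tau γ t := by simp only [tau, r]; nlinarith [pow_pos hr 2]
  have hle : y + tau γ t ≤ (r γ t / 2) ^ 2 := by simp only [tau, r]; linarith
  refine ⟨√(y + tau γ t), ?_, Real.sq_sqrt hnonneg, ?_⟩
  · rw [abs_of_nonneg (Real.sqrt_nonneg _)]
    exact Real.sqrt_le_iff.mpr ⟨by positivity, hle⟩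
  · have hC : C √(y + tau γ t) ^ 2 = C y + C (tau γ t) := by
      rw [← C_pow, Real.sq_sqrt hnonneg, C_add]
    have hsplit : T γ (t + 1) - C y
        = (T γ t - C √(y + tau γ t)) * (T γ t - C (-√(y + tau γ t))) := by
      rw [T_succ, C_neg]
      linear_combination hC
    rw [hsplit, roots_mul ((T_sub_C_monic γ t _).mul (T_sub_C_monic γ t _)).ne_zero]

lemma rootMean_succ (hγ : Admissible γ) {y : ℝ} (hy : |y| ≤ r γ (t + 1) / 2) :
    ∃ a, |a| ≤ r γ t / 2 ∧ a ^ 2 = y + tau γ t ∧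
      ∀ p, rootMean γ (t + 1) y p = (rootMean γ t a p + rootMean γ t (-a) p) / 2 := by
  obtain ⟨a, ha, ha2, hroots⟩ := roots_T_succ_sub_C hγ hy
  refine ⟨a, ha, ha2, fun p => ?_⟩
  simp only [rootMean, hroots, Multiset.map_add, Multiset.sum_add, pow_succ]
  ring

lemma rootMean_add (z : ℝ) : rootMean γ t z (p + q) = rootMean γ t z p + rootMean γ t z q := by
  simp only [rootMean, eval_add, Multiset.sum_map_add, add_div]

lemma rootMean_T_pow_mul (z : ℝ) (i : ℕ) :
    rootMean γ t z (T γ t ^ i * p) = z ^ i * rootMean γ t z p := by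
  have hroot : ∀ x ∈ (T γ t - C z).roots, (T γ t ^ i * p).eval x = z ^ i * p.eval x := by
    intro x hx
    have := (mem_roots (T_sub_C_monic γ t z).ne_zero).mp hx
    rw [IsRoot, eval_sub, eval_C, sub_eq_zero] at this
    rw [eval_mul, eval_pow, this]
  rw [rootMean, rootMean, Multiset.map_congr rfl hroot, Multiset.sum_map_mul_left, mul_div_assoc]

lemma AffineOn.add (hp : AffineOn γ t p c d) (hq : AffineOn γ t q c' d') :
    AffineOn γ t (p + q) (c + c') (d + d') := fun z hz => by
  rw [rootMean_add, hp z hz, hq z hz]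
  ring

lemma AffineOn.succ (hγ : Admissible γ) (h : AffineOn γ t p c d) : AffineOn γ (t + 1) p c 0 := by
  intro y hy
  obtain ⟨a, ha, -, hmean⟩ := rootMean_succ hγ hy
  rw [hmean, h a ha, h (-a) (by rwa [abs_neg])]
  ring

lemma AffineOn.mono (hγ : Admissible γ) (h : AffineOn γ t p c d) {t' : ℕ} (htt' : t ≤ t') :
    AffineOn γ t' p c (if t' = t then d else 0) := by
  induction t', htt' using Nat.le_induction with
  | base => simpa using h
  | succ t' htt' ih => simpa [show t' + 1 ≠ t by omega] using ih.succ hγ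

lemma AffineOn.T_pow_mul (hγ : Admissible γ) (h : AffineOn γ t p c d) {i : ℕ} (hi : i = 1 ∨ i = 2) :
    AffineOn γ (t + 1) (T γ t ^ i * p)
      ((if i = 1 then d else c) * tau γ t) (if i = 1 then d else c) := by
  intro y hy
  obtain ⟨a, ha, ha2, hmean⟩ := rootMean_succ hγ hy
  rw [hmean, rootMean_T_pow_mul, rootMean_T_pow_mul, h a ha, h (-a) (by rwa [abs_neg])]
  rcases hi with rfl | rfl
  · simp only [if_true]
    linear_combination d * ha2
  · simp only [show (2 : ℕ) ≠ 1 by norm_num, if_false]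
    linear_combination c * ha2

lemma affineOn_C (hγ : Admissible γ) (t : ℕ) (c : ℝ) : AffineOn γ t (C c) c 0 := by
  induction t with
  | zero =>
    intro z _
    simp only [rootMean, T_zero_sub_C, roots_X_sub_C, eval_C]
    simp
  | succ t ih => exact ih.succ hγ

end RootMean

section Integrals

variable {γ : ℕ → ℝ} {μ : Measure ℝ} {t : ℕ} {p : ℝ[X]} {c d : ℝ}

lemma integral_eq_of_affineOn (hγ : Admissible γ) (hμ : TendstoInMoments γ μ)
    (h : AffineOn γ t p c d) : ∫ x, p.eval x ∂μ = c := by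
  have hev : ∀ᶠ t' in atTop, nuInt γ t' (fun x => p.eval x) = c := by
    filter_upwards [eventually_ge_atTop (t + 1)] with t' ht'
    have hzero : |(0 : ℝ)| ≤ r γ t' / 2 := by rw [abs_zero]; linarith [r_pos hγ t']
    have hmean := h.mono hγ (by omega : t ≤ t') 0 hzero
    rwa [if_neg (by omega), mul_zero, add_zero, rootMean, map_zero, sub_zero] at hmean
  exact tendsto_nhds_unique (hμ p) (tendsto_const_nhds.congr' (EventuallyEq.symm hev))

lemma exists_affineOn_of_natDegree_lt (hγ : Admissible γ) :
    ∀ p : ℝ[X], p.natDegree < 2 ^ t → ∃ c, AffineOn γ t p c 0 := by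
  induction t with
  | zero =>
    intro p hp
    rw [eq_C_of_natDegree_eq_zero (by omega : p.natDegree = 0)]
    exact ⟨_, affineOn_C hγ 0 _⟩
  | succ t ih =>
    intro p hp
    have hT := T_monic γ t
    have hdeg := T_natDegree γ t
    obtain ⟨c, hrem⟩ := ih (p %ₘ T γ t) (hdeg ▸ natDegree_modByMonic_lt p hT
      (fun h1 => by rw [h1, natDegree_one] at hdeg; exact absurd hdeg.symm (by positivity)))
    obtain ⟨c', hquo⟩ := ih (p /ₘ T γ t) (by rw [natDegree_divByMonic p hT, hdeg]; omega)
    refine ⟨c + 0 * tau γ t, ?_⟩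
    have := (hrem.succ hγ).add (hquo.T_pow_mul hγ (Or.inl rfl))
    rwa [pow_one, if_pos rfl, add_zero, modByMonic_add_div p (T γ t)] at this

lemma integral_T_mul_eq_zero (hγ : Admissible γ) (hμ : TendstoInMoments γ μ) (s : ℕ)
    (hp : p.natDegree < 2 ^ s) : ∫ x, (T γ s).eval x * p.eval x ∂μ = 0 := by
  obtain ⟨c, hc⟩ := exists_affineOn_of_natDegree_lt hγ p hp
  have := integral_eq_of_affineOn hγ hμ (hc.T_pow_mul hγ (Or.inl rfl))
  simpa only [pow_one, eval_mul, ↓reduceIte, zero_mul] using this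

lemma integral_T_sq (hγ : Admissible γ) (hμ : TendstoInMoments γ μ) (s : ℕ) :
    ∫ x, (T γ s).eval x ^ 2 ∂μ = tau γ s := by
  have := integral_eq_of_affineOn hγ hμ ((affineOn_C hγ s 1).T_pow_mul hγ (Or.inr rfl))
  simpa only [eval_mul, eval_pow, eval_C, mul_one, one_mul, if_neg (by norm_num : (2 : ℕ) ≠ 1)]
    using this

end Integrals

lemma eq_of_monic_of_orthogonal {μ : Measure ℝ}
    (hint : ∀ p : ℝ[X], Integrable (fun x => p.eval x) μ)
    (hpos : ∀ p : ℝ[X], p ≠ 0 → 0 < ∫ x, (p.eval x) ^ 2 ∂μ)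
    {p q : ℝ[X]} (hp : p.Monic) (hq : q.Monic) (hdeg : p.natDegree = q.natDegree)
    (hp_orth : ∀ h : ℝ[X], h.degree < p.natDegree → ∫ x, p.eval x * h.eval x ∂μ = 0)
    (hq_orth : ∀ h : ℝ[X], h.degree < q.natDegree → ∫ x, q.eval x * h.eval x ∂μ = 0) :
    p = q := by
  have hlt : (p - q).degree < p.natDegree := by
    rw [← degree_eq_natDegree hp.ne_zero]
    exact degree_sub_lt_left (by rw [degree_eq_natDegree hp.ne_zero,
      degree_eq_natDegree hq.ne_zero, hdeg]) hp.ne_zero (by rw [hp.leadingCoeff, hq.leadingCoeff])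
  have hsq : ∫ x, (p - q).eval x ^ 2 ∂μ = 0 := by
    have hsplit : (fun x => (p - q).eval x ^ 2)
        = fun x => p.eval x * (p - q).eval x - q.eval x * (p - q).eval x := by
      funext x
      rw [eval_sub]
      ring
    rw [hsplit, integral_sub, hp_orth _ hlt, hq_orth _ (hdeg ▸ hlt), sub_zero]
    · simpa only [eval_mul] using hint (p * (p - q))
    · simpa only [eval_mul] using hint (q * (p - q))
  by_contra hne
  exact (hpos _ (sub_ne_zero.mpr hne)).ne' hsq

lemma Q_two_pow_eq_T {γ : ℕ → ℝ} (hγ : Admissible γ) {μ : Measure ℝ} (hμ : TendstoInMoments γ μ)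
    (hint : ∀ p : ℝ[X], Integrable (fun x => p.eval x) μ)
    (hpos : ∀ p : ℝ[X], p ≠ 0 → 0 < ∫ x, (p.eval x) ^ 2 ∂μ)
    {Q : ℕ → ℝ[X]} (hQmonic : ∀ n, (Q n).Monic) (hQdeg : ∀ n, (Q n).natDegree = n)
    (hQorth : ∀ n : ℕ, ∀ p : ℝ[X], p.degree < (n : WithBot ℕ) →
      ∫ x, (Q n).eval x * p.eval x ∂μ = 0) (s : ℕ) :
    Q (2 ^ s) = T γ s := by
  refine eq_of_monic_of_orthogonal hint hpos (hQmonic _) (T_monic γ s)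
    (by rw [hQdeg, T_natDegree]) (fun h hh => hQorth _ h (by rwa [hQdeg] at hh))
    (fun h hh => integral_T_mul_eq_zero hγ hμ s ?_)
  rw [T_natDegree] at hh
  rcases eq_or_ne h 0 with rfl | h0
  · rw [natDegree_zero]
    positivity
  · exact (natDegree_lt_iff_degree_lt h0).mpr hh

section APolynomials

variable {γ : ℕ → ℝ} {sf idx : ℕ → ℕ}

/-- For `i = 1` only the slope survives, and the slope survives the climb from level `v + 1` to
level `u` only if `u = v + 1`: hence the factor `(i - 1) ^ (u - v - 1)`. -/
lemma AffineOn.T_pow_mul_of_lt (hγ : Admissible γ) {v u i : ℕ} {p : ℝ[X]} {Ψ : ℝ}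
    (h : AffineOn γ (v + 1) p (Ψ * tau γ v) Ψ) (hvu : v < u) (hi : i = 1 ∨ i = 2) :
    AffineOn γ (u + 1) (T γ u ^ i * p)
      (Ψ * ((i : ℝ) - 1) ^ (u - v - 1) * tau γ v ^ (i - 1) * tau γ u)
      (Ψ * ((i : ℝ) - 1) ^ (u - v - 1) * tau γ v ^ (i - 1)) := by
  have key : (if i = 1 then (if u = v + 1 then Ψ else 0) else Ψ * tau γ v)
      = Ψ * ((i : ℝ) - 1) ^ (u - v - 1) * tau γ v ^ (i - 1) := by
    rcases hi with rfl | rfl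
    · rcases eq_or_ne u (v + 1) with rfl | huv
      · simp
      · simp [huv, zero_pow (show u - v - 1 ≠ 0 by omega)]
    · norm_num
  rw [← key]
  exact (h.mono hγ (show v + 1 ≤ u by omega)).T_pow_mul hγ hi

noncomputable def apolyCoeff (sf idx : ℕ → ℕ) (m : ℕ) : ℝ :=
  ∏ k ∈ Finset.Icc 1 m, ((idx k : ℝ) - 1) ^ (if k = 1 then sf 1 else sf k - sf (k - 1) - 1)

lemma affineOn_apoly (hγ : Admissible γ) (hs1 : 0 < sf 1) {m : ℕ} (hm : 1 ≤ m)
    (hsmono : ∀ k, 1 ≤ k → k < m → sf k < sf (k + 1))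
    (hidx : ∀ k, 1 ≤ k → k ≤ m → idx k = 1 ∨ idx k = 2) :
    let Ψ := apolyCoeff sf idx m * ∏ k ∈ Finset.Ico 1 m, tau γ (sf k) ^ (idx (k + 1) - 1)
    AffineOn γ (sf m + 1) (∏ j ∈ Finset.Icc 1 m, T γ (sf j) ^ idx j) (Ψ * tau γ (sf m)) Ψ := by
  induction m, hm using Nat.le_induction with
  | base =>
    have h := (affineOn_C hγ (sf 1) 1).T_pow_mul hγ (hidx 1 le_rfl le_rfl)
    have hcoeff : apolyCoeff sf idx 1 = if idx 1 = 1 then 0 else 1 := by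
      rcases hidx 1 le_rfl le_rfl with h1 | h1 <;> norm_num [apolyCoeff, h1, hs1.ne']
    simpa [hcoeff] using h
  | succ m hm ih =>
    have h := (ih (fun k hk hkm => hsmono k hk (by omega))
      (fun k hk hkm => hidx k hk (by omega))).T_pow_mul_of_lt hγ
        (hsmono m hm (by omega)) (hidx (m + 1) (by omega) le_rfl)
    intro Ψ
    have hΨ : Ψ = (apolyCoeff sf idx m * ∏ k ∈ Finset.Ico 1 m, tau γ (sf k) ^ (idx (k + 1) - 1))
        * ((idx (m + 1) : ℝ) - 1) ^ (sf (m + 1) - sf m - 1) * tau γ (sf m) ^ (idx (m + 1) - 1) := by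
      simp only [Ψ, apolyCoeff, Finset.prod_Icc_succ_top (show 1 ≤ m + 1 by omega),
        Finset.prod_Ico_succ_top hm, if_neg (show m + 1 ≠ 1 by omega), Nat.add_sub_cancel]
      ring
    rw [hΨ, Finset.prod_Icc_succ_top (show 1 ≤ m + 1 by omega), mul_comm]
    exact h

end APolynomials

end KGamma

open KGamma

theorem stmt_11_general (γ : ℕ → ℝ) (hγ : ∀ s : ℕ, 0 < γ (s + 1) ∧ γ (s + 1) < 1 / 4)
    (μ : Measure ℝ)
    (hμint : ∀ p : Polynomial ℝ, Integrable (fun x => p.eval x) μ)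
    (hμpos : ∀ p : Polynomial ℝ, p ≠ 0 → 0 < ∫ x, (p.eval x) ^ 2 ∂μ)
    (hμconv : ∀ p : Polynomial ℝ,
      Tendsto (fun s => nuInt γ s (fun x => p.eval x)) atTop (nhds (∫ x, p.eval x ∂μ)))
    (Q : ℕ → Polynomial ℝ) (hQmonic : ∀ n, (Q n).Monic) (hQdeg : ∀ n, (Q n).natDegree = n)
    (hQorth : ∀ n : ℕ, ∀ p : Polynomial ℝ, p.degree < (n : WithBot ℕ) →
      ∫ x, (Q n).eval x * p.eval x ∂μ = 0)
    (n : ℕ) (hn : 1 ≤ n) (sf idx : ℕ → ℕ)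
    (hs1 : 0 < sf 1) (hsmono : ∀ k, 1 ≤ k → k < n → sf k < sf (k + 1))
    (hidx : ∀ k, 1 ≤ k → k ≤ n → idx k = 1 ∨ idx k = 2)
 :
    ∫ x, ∏ j ∈ Finset.Icc 1 n, ((Q (2 ^ sf j)).eval x) ^ idx j ∂μ =
      (∏ k ∈ Finset.Icc 1 n,
          ((idx k : ℝ) - 1) ^ (if k = 1 then sf 1 else sf k - sf (k - 1) - 1)) *
        ∏ k ∈ Finset.Icc 1 n,
          (∫ x, ((Q (2 ^ sf k)).eval x) ^ 2 ∂μ) ^ (if k = n then 1 else idx (k + 1) - 1) := by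
  have hQ := Q_two_pow_eq_T hγ hμconv hμint hμpos hQmonic hQdeg hQorth
  have hA := integral_eq_of_affineOn hγ hμconv (affineOn_apoly hγ hs1 hn hsmono hidx)
  simp only [eval_prod, eval_pow] at hA
  simp only [hQ, integral_T_sq hγ hμconv, hA, apolyCoeff]
  have htop : ∀ k ∈ Finset.Ico 1 n,
      tau γ (sf k) ^ (if k = n then 1 else idx (k + 1) - 1) = tau γ (sf k) ^ (idx (k + 1) - 1) :=
    fun k hk => by rw [if_neg (Finset.mem_Ico.mp hk).2.ne]
  rw [← Finset.prod_Ico_mul_eq_prod_Icc (f := fun k => tau γ (sf k) ^ _) hn,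
    Finset.prod_congr rfl htop, if_pos rfl, pow_one]
  ring

theorem stmt_11 (γ : ℕ → ℝ) (hγ : ∀ s : ℕ, 0 < γ (s + 1) ∧ γ (s + 1) < 1 / 4)
    (μ : Measure ℝ) [IsProbabilityMeasure μ]
    (hμint : ∀ p : Polynomial ℝ, Integrable (fun x => p.eval x) μ)
    (hμpos : ∀ p : Polynomial ℝ, p ≠ 0 → 0 < ∫ x, (p.eval x) ^ 2 ∂μ)
    (hμconv : ∀ p : Polynomial ℝ,
      Tendsto (fun s => nuInt γ s (fun x => p.eval x)) atTop (nhds (∫ x, p.eval x ∂μ)))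
    (Q : ℕ → Polynomial ℝ) (hQmonic : ∀ n, (Q n).Monic) (hQdeg : ∀ n, (Q n).natDegree = n)
    (hQorth : ∀ n : ℕ, ∀ p : Polynomial ℝ, p.degree < (n : WithBot ℕ) →
      ∫ x, (Q n).eval x * p.eval x ∂μ = 0)
    (n : ℕ) (hn : 1 ≤ n) (sf idx : ℕ → ℕ)
    (hs1 : 0 < sf 1) (hsmono : ∀ k, 1 ≤ k → k < n → sf k < sf (k + 1))
    (hidx : ∀ k, 1 ≤ k → k ≤ n → idx k = 1 ∨ idx k = 2)
 :
    ∫ x, ∏ j ∈ Finset.Icc 1 n, ((Q (2 ^ sf j)).eval x) ^ idx j ∂μ =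
      (∏ k ∈ Finset.Icc 1 n,
          ((idx k : ℝ) - 1) ^ (if k = 1 then sf 1 else sf k - sf (k - 1) - 1)) *
        ∏ k ∈ Finset.Icc 1 n,
          (∫ x, ((Q (2 ^ sf k)).eval x) ^ 2 ∂μ) ^ (if k = n then 1 else idx (k + 1) - 1) :=
  stmt_11_general γ hγ μ hμint hμpos hμconv Q hQmonic hQdeg hQorth n hn sf idx hs1 hsmono hidx
end

section
/- The B-polynomials satisfy: (i) for all j, k, m, s ≥ 0 with s ≠ m, ∫ B_{(2k+1)·2^s} · B_{(2j+1)·2^m} dμ = 0; (ii) for every n ≥ 1 with binary digits i_0,…,i_m, ||B_n||² = ∏_{k=0}^m ||Q_{2^k}||^{2 i_k} = ∏_{k : i_k = 1} ||Q_{2^k}||². -/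
/-!
Put `A_s = P_{2^s} + r_s/2`. For `-r_{t+1} < y < 0` the level set `{P_{2^{t+1}} = y}` is the
union of the level sets of `P_{2^t}` at two levels `a`, `-r_t - a` in `(-r_t, 0)`, symmetric about
`-r_t/2`. By induction on `t`, a polynomial of degree `< 2^t` has the same sum over all these level
sets of `P_{2^t}`; and for `t > s`, `G(A_s) · p` with `G` odd and `deg p < 2^s` sums to zero over
them, since the contributions of paired level sets of `P_{2^s}` cancel. So every `ν_t`, `t > s`,
annihilates `G(A_s) · p`, and so does the limit `μ`.

With `G = X` this says `A_s ⊥ ℝ[X]_{<2^s}`, so `Q_{2^s} = A_s` and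
`Q_{2^s}² = Q_{2^{s+1}} + c_s`. Integrating against a polynomial of degree `< 2^{s+1}` kills
`Q_{2^{s+1}}`, which gives `∫ Q_{2^s}² p dμ = ‖Q_{2^s}‖² ∫ p dμ`; peeling off the top binary
digit of `n` proves (ii). For (i) with `s < m`, every factor `Q_{2^k}`, `k > s`, is a polynomial
in `Q_{2^s}²`, so `B_a B_b = Q_{2^s} · H(Q_{2^s}²)` is an odd polynomial in `A_s`.
-/

open Polynomial MeasureTheory Filter

/-- The `B`-polynomial `B_n = ∏_{k} (Q_{2^k})^{i_k}` where `n = Σ i_k 2^k` is the binary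
expansion of `n` (all set bits of `n` are `< n` for `n ≥ 1`). -/
noncomputable def Bpoly (Q : ℕ → Polynomial ℝ) (n : ℕ) : Polynomial ℝ :=
  ∏ k ∈ Finset.range n, if Nat.testBit n k then Q (2 ^ k) else 1

open Set

section Discrete

variable {γ : ℕ → ℝ}

lemma r_pos (hγ : ∀ s : ℕ, 0 < γ (s + 1) ∧ γ (s + 1) < 1 / 4) (s : ℕ) : 0 < r γ s := by
  induction s with
  | zero => norm_num [r]
  | succ s ih => have := (hγ s).1; rw [r]; positivity

lemma P_monic_and_natDegree (s : ℕ) : (P γ s).Monic ∧ (P γ s).natDegree = 2 ^ s := by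
  induction s with
  | zero => exact ⟨monic_X_sub_C 1, natDegree_X_sub_C 1⟩
  | succ s ih =>
    obtain ⟨hm, hd⟩ := ih
    have hm' : (P γ s + C (r γ s)).Monic := hm.add_of_left <| degree_C_le.trans_lt <| by
      rw [degree_eq_natDegree hm.ne_zero, hd]; exact_mod_cast Nat.two_pow_pos s
    refine ⟨hm.mul hm', ?_⟩
    rw [P, hm.natDegree_mul hm', natDegree_add_C, hd, pow_succ, mul_two]

lemma P_monic (s : ℕ) : (P γ s).Monic := (P_monic_and_natDegree s).1

lemma P_natDegree (s : ℕ) : (P γ s).natDegree = 2 ^ s := (P_monic_and_natDegree s).2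

lemma P_add_C_monic (s : ℕ) (y : ℝ) : (P γ s + C y).Monic :=
  (P_monic s).add_of_left <| degree_C_le.trans_lt <| by
    rw [degree_eq_natDegree (P_monic s).ne_zero, P_natDegree]; exact_mod_cast Nat.two_pow_pos s

lemma P_sub_C_monic (s : ℕ) (y : ℝ) : (P γ s - C y).Monic := by
  simpa [sub_eq_add_neg] using P_add_C_monic (γ := γ) s (-y)

lemma eval_P_of_mem_roots {s : ℕ} {y x : ℝ} (hx : x ∈ (P γ s - C y).roots) :
    (P γ s).eval x = y := by
  simpa [sub_eq_zero] using (mem_roots (P_sub_C_monic s y).ne_zero).mp hx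

lemma P_succ_sub_C_eq_mul (t : ℕ) (a y : ℝ) (hy : a * (-r γ t - a) = -y) :
    P γ (t + 1) - C y = (P γ t - C a) * (P γ t - C (-r γ t - a)) := by
  have hC := congrArg C hy
  simp only [map_neg, map_sub, map_mul] at hC ⊢
  rw [P]
  linear_combination -hC

-- `a` is the smaller root of `a² + r_t a - y`; it is real and lies in `(-r_t, 0)` because
-- `-γ_{t+1} r_t² < y < 0` and `γ_{t+1} < 1/4`.
lemma exists_roots_P_succ_sub_C (hγ : ∀ s : ℕ, 0 < γ (s + 1) ∧ γ (s + 1) < 1 / 4) {t : ℕ} {y : ℝ}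
    (hy : y ∈ Ioo (-r γ (t + 1)) 0) :
    ∃ a ∈ Ioo (-r γ t) 0,
      (P γ (t + 1) - C y).roots = (P γ t - C a).roots + (P γ t - C (-r γ t - a)).roots := by
  have hr := r_pos hγ t
  have hD : 0 < r γ t ^ 2 + 4 * y := by
    have : r γ (t + 1) = γ (t + 1) * r γ t ^ 2 := rfl
    nlinarith [(hγ t).2, hy.1]
  set D := r γ t ^ 2 + 4 * y
  have hsq := Real.sq_sqrt hD.le
  have hsqrt_pos := Real.sqrt_pos.mpr hD
  have hsqrt_lt : √D < r γ t := (Real.sqrt_lt' hr).mpr (by linarith [hy.2])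
  refine ⟨(-r γ t - √D) / 2, ⟨by linarith, by linarith⟩, ?_⟩
  rw [P_succ_sub_C_eq_mul t ((-r γ t - √D) / 2) y (by linear_combination (-1 / 4) * hsq),
    roots_mul ((P_sub_C_monic t _).mul (P_sub_C_monic t _)).ne_zero]

lemma neg_r_sub_mem_Ioo {t : ℕ} {a : ℝ} (ha : a ∈ Ioo (-r γ t) 0) :
    -r γ t - a ∈ Ioo (-r γ t) 0 :=
  ⟨by linarith [ha.2], by linarith [ha.1]⟩

noncomputable def levelSum (γ : ℕ → ℝ) (t : ℕ) (y : ℝ) (f : ℝ → ℝ) : ℝ :=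
  ((P γ t - C y).roots.map f).sum

lemma levelSum_congr {t : ℕ} {y : ℝ} {f g : ℝ → ℝ}
    (hfg : ∀ x, (P γ t).eval x = y → f x = g x) : levelSum γ t y f = levelSum γ t y g :=
  congrArg Multiset.sum <| Multiset.map_congr rfl fun _ hx => hfg _ (eval_P_of_mem_roots hx)

lemma levelSum_mul_left {t : ℕ} {y : ℝ} (c : ℝ) (f : ℝ → ℝ) :
    levelSum γ t y (fun x => c * f x) = c * levelSum γ t y f :=
  Multiset.sum_map_mul_left

lemma levelSum_eval_eq_modByMonic_add_divByMonic (t : ℕ) (y : ℝ) (p : ℝ[X]) :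
    levelSum γ t y p.eval = levelSum γ t y (p %ₘ P γ t).eval
      + y * levelSum γ t y (p /ₘ P γ t).eval := by
  rw [← levelSum_mul_left, levelSum, levelSum, levelSum, ← Multiset.sum_map_add]
  refine congrArg _ <| Multiset.map_congr rfl fun x hx => ?_
  conv_lhs => rw [← modByMonic_add_div p (P γ t)]
  rw [eval_add, eval_mul, eval_P_of_mem_roots hx]

variable (hγ : ∀ s : ℕ, 0 < γ (s + 1) ∧ γ (s + 1) < 1 / 4)
include hγ

lemma card_roots_P_sub_C {t : ℕ} {y : ℝ} (hy : y ∈ Ioo (-r γ t) 0) :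
    Multiset.card (P γ t - C y).roots = 2 ^ t := by
  induction t generalizing y with
  | zero =>
    rw [P, sub_sub, ← C_1, ← C_add, roots_X_sub_C]
    rfl
  | succ t ih =>
    obtain ⟨a, ha, hroots⟩ := exists_roots_P_succ_sub_C hγ hy
    rw [hroots, Multiset.card_add, ih ha, ih (neg_r_sub_mem_Ioo ha), pow_succ, mul_two]

lemma exists_levelSum_succ {t : ℕ} {y : ℝ} (hy : y ∈ Ioo (-r γ (t + 1)) 0) :
    ∃ a ∈ Ioo (-r γ t) 0, ∀ f : ℝ → ℝ,
      levelSum γ (t + 1) y f = levelSum γ t a f + levelSum γ t (-r γ t - a) f := by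
  obtain ⟨a, ha, hroots⟩ := exists_roots_P_succ_sub_C hγ hy
  exact ⟨a, ha, fun f => by rw [levelSum, hroots, Multiset.map_add, Multiset.sum_add]; rfl⟩

lemma levelSum_const {t : ℕ} {y : ℝ} (hy : y ∈ Ioo (-r γ t) 0) (c : ℝ) :
    levelSum γ t y (fun _ => c) = 2 ^ t * c := by
  rw [levelSum, Multiset.map_const', Multiset.sum_replicate, card_roots_P_sub_C hγ hy,
    nsmul_eq_mul, Nat.cast_pow, Nat.cast_ofNat]

lemma levelSum_eval_eq_of_natDegree_lt {t : ℕ} {p : ℝ[X]} (hp : p.natDegree < 2 ^ t) {y y' : ℝ}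
    (hy : y ∈ Ioo (-r γ t) 0) (hy' : y' ∈ Ioo (-r γ t) 0) :
    levelSum γ t y p.eval = levelSum γ t y' p.eval := by
  induction t generalizing p y y' with
  | zero =>
    rw [eq_C_of_natDegree_eq_zero (Nat.lt_one_iff.mp hp)]
    simp only [eval_C, levelSum_const hγ hy, levelSum_const hγ hy']
  | succ t ih =>
    have hmid : -r γ t / 2 ∈ Ioo (-r γ t) 0 := by constructor <;> linarith [r_pos hγ t]
    have hP1 : P γ t ≠ 1 := fun h => by
      simpa [h] using (Nat.two_pow_pos t).trans_eq (P_natDegree (γ := γ) t).symm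
    have hmod : (p %ₘ P γ t).natDegree < 2 ^ t := by
      simpa only [P_natDegree] using natDegree_modByMonic_lt p (P_monic t) hP1
    have hdiv : (p /ₘ P γ t).natDegree < 2 ^ t := by
      rw [natDegree_divByMonic p (P_monic t), P_natDegree]; rw [pow_succ] at hp; omega
    suffices key : ∀ z ∈ Ioo (-r γ (t + 1)) 0, levelSum γ (t + 1) z p.eval =
        2 * levelSum γ t (-r γ t / 2) (p %ₘ P γ t).eval
          - r γ t * levelSum γ t (-r γ t / 2) (p /ₘ P γ t).eval by
      rw [key y hy, key y' hy']
    intro z hz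
    obtain ⟨a, ha, hsplit⟩ := exists_levelSum_succ hγ hz
    rw [hsplit, levelSum_eval_eq_modByMonic_add_divByMonic,
      levelSum_eval_eq_modByMonic_add_divByMonic t (-r γ t - a), ih hmod ha hmid,
      ih hdiv ha hmid, ih hmod (neg_r_sub_mem_Ioo ha) hmid, ih hdiv (neg_r_sub_mem_Ioo ha) hmid]
    ring

lemma levelSum_odd_mul_eq_zero {s : ℕ} {p : ℝ[X]} (hp : p.natDegree < 2 ^ s) {F : ℝ → ℝ}
    (hF : ∀ a, F (-r γ s - a) = -F a) {t : ℕ} (hst : s < t) {y : ℝ}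
    (hy : y ∈ Ioo (-r γ t) 0) :
    levelSum γ t y (fun x => F ((P γ s).eval x) * p.eval x) = 0 := by
  induction t, hst using Nat.le_induction generalizing y with
  | base =>
    obtain ⟨a, ha, hsplit⟩ := exists_levelSum_succ hγ hy
    have hlevel : ∀ b, levelSum γ s b (fun x => F ((P γ s).eval x) * p.eval x)
        = F b * levelSum γ s b p.eval := fun b => by
      rw [← levelSum_mul_left]; exact levelSum_congr fun x hx => by rw [hx]
    rw [hsplit, hlevel, hlevel, hF,
      levelSum_eval_eq_of_natDegree_lt hγ hp (neg_r_sub_mem_Ioo ha) ha]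
    ring
  | succ t hst ih =>
    obtain ⟨a, ha, hsplit⟩ := exists_levelSum_succ hγ hy
    rw [hsplit, ih ha, ih (neg_r_sub_mem_Ioo ha), add_zero]

end Discrete

section Measure

variable {γ : ℕ → ℝ} {μ : Measure ℝ}

lemma nuInt_eq_levelSum (t : ℕ) (f : ℝ → ℝ) :
    nuInt γ t f = levelSum γ t (-r γ t / 2) f / 2 ^ t := by
  rw [nuInt, levelSum, sub_eq_add_neg, ← C_neg, neg_div, neg_neg]

lemma integral_comp_mul_eq_zero_of_odd (hγ : ∀ s : ℕ, 0 < γ (s + 1) ∧ γ (s + 1) < 1 / 4)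
    (hμconv : ∀ p : Polynomial ℝ,
      Tendsto (fun s => nuInt γ s (fun x => p.eval x)) atTop (nhds (∫ x, p.eval x ∂μ)))
    {s : ℕ} {G p : ℝ[X]} (hG : Function.Odd G.eval) (hp : p.natDegree < 2 ^ s) :
    ∫ x, (G.comp (P γ s + C (r γ s / 2)) * p).eval x ∂μ = 0 := by
  have hF : ∀ a, G.eval (-r γ s - a + r γ s / 2) = -G.eval (a + r γ s / 2) := fun a => by
    rw [← hG]; ring_nf
  have hnu : ∀ t, s < t → nuInt γ t (fun x => (G.comp (P γ s + C (r γ s / 2)) * p).eval x) = 0 :=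
    fun t hst => by
      have hmid : -r γ t / 2 ∈ Ioo (-r γ t) 0 := by constructor <;> linarith [r_pos hγ t]
      simp only [nuInt_eq_levelSum, eval_mul, eval_comp, eval_add, eval_C]
      rw [levelSum_odd_mul_eq_zero hγ hp (F := fun a => G.eval (a + r γ s / 2)) hF hst hmid,
        zero_div]
  exact tendsto_nhds_unique (hμconv _) <| tendsto_const_nhds.congr' <|
    eventually_atTop.2 ⟨s + 1, fun t ht => (hnu t ht).symm⟩

lemma eq_of_monic_of_integral_mul_eq_zero
    (hμint : ∀ p : Polynomial ℝ, Integrable (fun x => p.eval x) μ)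
    (hμpos : ∀ p : Polynomial ℝ, p ≠ 0 → 0 < ∫ x, (p.eval x) ^ 2 ∂μ)
    {f g : ℝ[X]} (hf : f.Monic) (hg : g.Monic) (hfg : f.natDegree = g.natDegree)
    (hforth : ∀ p : ℝ[X], p.natDegree < f.natDegree → ∫ x, (f * p).eval x ∂μ = 0)
    (hgorth : ∀ p : ℝ[X], p.natDegree < g.natDegree → ∫ x, (g * p).eval x ∂μ = 0) :
    f = g := by
  by_contra hne
  have hd : f - g ≠ 0 := sub_ne_zero.mpr hne
  have hdeg : (f - g).natDegree < f.natDegree := natDegree_lt_natDegree hd <|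
    degree_sub_lt_left (by rw [degree_eq_natDegree hf.ne_zero, degree_eq_natDegree hg.ne_zero, hfg])
      hf.ne_zero (by rw [hf.leadingCoeff, hg.leadingCoeff])
  have hsq : ∫ x, ((f - g).eval x) ^ 2 ∂μ = 0 := by
    have hexpand : (fun x => ((f - g).eval x) ^ 2)
        = fun x => (f * (f - g)).eval x - (g * (f - g)).eval x := by
      funext x; simp only [eval_mul, eval_sub]; ring
    rw [hexpand, integral_sub (hμint _) (hμint _), hforth _ hdeg, hgorth _ (hfg ▸ hdeg), sub_zero]
  exact (hμpos _ hd).ne' hsq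

end Measure

section OrthogonalPolynomials

variable {γ : ℕ → ℝ} {μ : Measure ℝ} {Q : ℕ → ℝ[X]}

lemma integral_Q_mul_eq_zero
    (hQorth : ∀ n : ℕ, ∀ p : Polynomial ℝ, p.degree < (n : WithBot ℕ) →
      ∫ x, (Q n).eval x * p.eval x ∂μ = 0)
    {n : ℕ} {p : ℝ[X]} (hp : p.natDegree < n) : ∫ x, (Q n * p).eval x ∂μ = 0 := by
  simpa only [eval_mul] using hQorth n p (degree_le_natDegree.trans_lt (by exact_mod_cast hp))

lemma Q_two_pow_eq (hγ : ∀ s : ℕ, 0 < γ (s + 1) ∧ γ (s + 1) < 1 / 4)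
    (hμint : ∀ p : Polynomial ℝ, Integrable (fun x => p.eval x) μ)
    (hμpos : ∀ p : Polynomial ℝ, p ≠ 0 → 0 < ∫ x, (p.eval x) ^ 2 ∂μ)
    (hμconv : ∀ p : Polynomial ℝ,
      Tendsto (fun s => nuInt γ s (fun x => p.eval x)) atTop (nhds (∫ x, p.eval x ∂μ)))
    (hQmonic : ∀ n, (Q n).Monic) (hQdeg : ∀ n, (Q n).natDegree = n)
    (hQorth : ∀ n : ℕ, ∀ p : Polynomial ℝ, p.degree < (n : WithBot ℕ) →
      ∫ x, (Q n).eval x * p.eval x ∂μ = 0) (s : ℕ) :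
    Q (2 ^ s) = P γ s + C (r γ s / 2) := by
  have hdeg : (P γ s + C (r γ s / 2)).natDegree = 2 ^ s := by
    rw [natDegree_add_C, P_natDegree]
  refine eq_of_monic_of_integral_mul_eq_zero hμint hμpos (hQmonic _) (P_add_C_monic s _)
    (by rw [hQdeg, hdeg]) (fun p hp => integral_Q_mul_eq_zero hQorth (by rwa [hQdeg] at hp))
    fun p hp => ?_
  simpa only [X_comp] using integral_comp_mul_eq_zero_of_odd hγ hμconv (G := X)
    (fun y => by simp) (hdeg ▸ hp)

lemma Q_two_pow_sq_eq_add_C (hQ : ∀ s, Q (2 ^ s) = P γ s + C (r γ s / 2)) (s : ℕ) :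
    ∃ c, Q (2 ^ s) ^ 2 = Q (2 ^ (s + 1)) + C c := by
  have hr : C (r γ s) = 2 * C (r γ s / 2) := by rw [← C_ofNat, ← C_mul]; ring_nf
  refine ⟨(r γ s / 2) ^ 2 - r γ (s + 1) / 2, ?_⟩
  rw [hQ, hQ, P, map_sub, map_pow]
  linear_combination (-P γ s) * hr

lemma integral_Q_two_pow_mul_eq_zero_of_mem_adjoin
    (hγ : ∀ s : ℕ, 0 < γ (s + 1) ∧ γ (s + 1) < 1 / 4)
    (hμconv : ∀ p : Polynomial ℝ,
      Tendsto (fun s => nuInt γ s (fun x => p.eval x)) atTop (nhds (∫ x, p.eval x ∂μ)))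
    {s : ℕ} (hQ : Q (2 ^ s) = P γ s + C (r γ s / 2)) {g : ℝ[X]}
    (hg : g ∈ Algebra.adjoin ℝ {Q (2 ^ s) ^ 2}) : ∫ x, (Q (2 ^ s) * g).eval x ∂μ = 0 := by
  rw [Algebra.adjoin_singleton_eq_range_aeval, AlgHom.mem_range] at hg
  obtain ⟨H, rfl⟩ := hg
  have hcomp : Q (2 ^ s) * aeval (Q (2 ^ s) ^ 2) H
      = (X * H.comp (X ^ 2)).comp (P γ s + C (r γ s / 2)) * 1 := by
    rw [mul_one, ← hQ, mul_comp, X_comp, comp_assoc, X_pow_comp, comp_eq_aeval]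
  rw [hcomp]
  exact integral_comp_mul_eq_zero_of_odd hγ hμconv (fun y => by simp)
    (by rw [natDegree_one]; exact Nat.two_pow_pos s)

lemma Q_two_pow_mem_adjoin (hsq : ∀ s, ∃ c, Q (2 ^ s) ^ 2 = Q (2 ^ (s + 1)) + C c) {s k : ℕ}
    (hsk : s < k) : Q (2 ^ k) ∈ Algebra.adjoin ℝ {Q (2 ^ s) ^ 2} := by
  have hstep : ∀ t, Q (2 ^ (t + 1)) ∈ Algebra.adjoin ℝ {Q (2 ^ t) ^ 2} := fun t => by
    obtain ⟨c, hc⟩ := hsq t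
    rw [eq_sub_of_add_eq hc.symm, ← algebraMap_eq]
    exact sub_mem (Algebra.subset_adjoin rfl) (Subalgebra.algebraMap_mem _ c)
  induction k, hsk using Nat.le_induction with
  | base => exact hstep s
  | succ k _ ih =>
    refine Algebra.adjoin_le (Set.singleton_subset_iff.mpr ?_) (hstep k)
    exact pow_mem ih 2

variable [IsProbabilityMeasure μ]
    (hμint : ∀ p : Polynomial ℝ, Integrable (fun x => p.eval x) μ)
    (hQorth : ∀ n : ℕ, ∀ p : Polynomial ℝ, p.degree < (n : WithBot ℕ) →
      ∫ x, (Q n).eval x * p.eval x ∂μ = 0)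
include hμint hQorth

lemma integral_Q_two_pow_sq_mul {s : ℕ} (hsq : ∃ c, Q (2 ^ s) ^ 2 = Q (2 ^ (s + 1)) + C c)
    {p : ℝ[X]} (hp : p.natDegree < 2 ^ (s + 1)) :
    ∫ x, (Q (2 ^ s) ^ 2 * p).eval x ∂μ
      = (∫ x, ((Q (2 ^ s)).eval x) ^ 2 ∂μ) * ∫ x, p.eval x ∂μ := by
  obtain ⟨c, hc⟩ := hsq
  have key : ∀ q : ℝ[X], q.natDegree < 2 ^ (s + 1) →
      ∫ x, (Q (2 ^ s) ^ 2 * q).eval x ∂μ = c * ∫ x, q.eval x ∂μ := fun q hq => by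
    rw [hc, add_mul]
    simp only [eval_add]
    rw [integral_add (hμint _) (hμint _), integral_Q_mul_eq_zero hQorth hq, zero_add]
    simp only [eval_mul, eval_C]
    exact integral_const_mul c _
  have hc' : ∫ x, ((Q (2 ^ s)).eval x) ^ 2 ∂μ = c := by
    simpa using key 1 (by rw [natDegree_one]; exact Nat.two_pow_pos _)
  rw [key p hp, hc']

lemma integral_sq_prod_Q_two_pow (hQmonic : ∀ n, (Q n).Monic) (hQdeg : ∀ n, (Q n).natDegree = n)
    (hsq : ∀ s, ∃ c, Q (2 ^ s) ^ 2 = Q (2 ^ (s + 1)) + C c) (T : Finset ℕ) :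
    ∫ x, ((∏ k ∈ T, Q (2 ^ k)) ^ 2).eval x ∂μ = ∏ k ∈ T, ∫ x, ((Q (2 ^ k)).eval x) ^ 2 ∂μ := by
  induction T using Finset.induction_on_max with
  | empty => simp
  | insert s T hlt ih =>
    have hs : s ∉ T := fun h => lt_irrefl s (hlt s h)
    have hdeg : ((∏ k ∈ T, Q (2 ^ k)) ^ 2).natDegree < 2 ^ (s + 1) := by
      rw [natDegree_pow, natDegree_prod_of_monic _ _ fun k _ => hQmonic _]
      simp only [hQdeg]
      have := Nat.geomSum_lt le_rfl hlt
      rw [pow_succ]; omega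
    rw [Finset.prod_insert hs, Finset.prod_insert hs, mul_pow,
      integral_Q_two_pow_sq_mul hμint hQorth (hsq s) hdeg, ih]

end OrthogonalPolynomials

section Bits

variable {Q : ℕ → ℝ[X]}

lemma Bpoly_eq_prod_filter (n : ℕ) :
    Bpoly Q n = ∏ k ∈ (Finset.range n).filter (fun k => n.testBit k), Q (2 ^ k) :=
  (Finset.prod_filter _ _).symm

lemma Bpoly_mem (S : Subalgebra ℝ ℝ[X]) {n : ℕ} (h : ∀ t, n.testBit t → Q (2 ^ t) ∈ S) :
    Bpoly Q n ∈ S := by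
  rw [Bpoly_eq_prod_filter]
  exact prod_mem fun t ht => h t (Finset.mem_filter.mp ht).2

lemma le_of_testBit_odd_mul_two_pow {k s t : ℕ} (h : ((2 * k + 1) * 2 ^ s).testBit t) : s ≤ t := by
  rw [Nat.testBit_mul_two_pow] at h
  simp only [Bool.and_eq_true, decide_eq_true_eq] at h
  exact h.1

lemma testBit_odd_mul_two_pow_self (k s : ℕ) : ((2 * k + 1) * 2 ^ s).testBit s := by
  simp [Nat.testBit_mul_two_pow, Nat.testBit_zero]

lemma exists_Bpoly_odd_mul_two_pow_eq_mul (S : Subalgebra ℝ ℝ[X]) {s : ℕ}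
    (hS : ∀ t, s < t → Q (2 ^ t) ∈ S) (k : ℕ) :
    ∃ g ∈ S, Bpoly Q ((2 * k + 1) * 2 ^ s) = Q (2 ^ s) * g := by
  set n := (2 * k + 1) * 2 ^ s
  have hs : n.testBit s := testBit_odd_mul_two_pow_self k s
  have hmem : s ∈ (Finset.range n).filter (fun t => n.testBit t) :=
    Finset.mem_filter.mpr
      ⟨Finset.mem_range.mpr <| Nat.lt_two_pow_self.trans_le (Nat.ge_two_pow_of_testBit hs), hs⟩
  refine ⟨_, prod_mem fun t ht => hS t ?_,
    (Bpoly_eq_prod_filter n).trans (Finset.mul_prod_erase _ _ hmem).symm⟩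
  obtain ⟨hts, ht⟩ := Finset.mem_erase.mp ht
  exact (le_of_testBit_odd_mul_two_pow (Finset.mem_filter.mp ht).2).lt_of_ne' hts

lemma integral_Bpoly_mul_Bpoly_eq_zero {μ : Measure ℝ}
    (hsq : ∀ s, ∃ c, Q (2 ^ s) ^ 2 = Q (2 ^ (s + 1)) + C c)
    (hodd : ∀ s, ∀ g ∈ Algebra.adjoin ℝ {Q (2 ^ s) ^ 2}, ∫ x, (Q (2 ^ s) * g).eval x ∂μ = 0)
    {j k m s : ℕ} (hsm : s < m) :
    ∫ x, (Bpoly Q ((2 * k + 1) * 2 ^ s) * Bpoly Q ((2 * j + 1) * 2 ^ m)).eval x ∂μ = 0 := by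
  have hS : ∀ t, s < t → Q (2 ^ t) ∈ Algebra.adjoin ℝ {Q (2 ^ s) ^ 2} :=
    fun t => Q_two_pow_mem_adjoin hsq
  obtain ⟨g, hg, hB⟩ := exists_Bpoly_odd_mul_two_pow_eq_mul _ hS k
  have hB' : Bpoly Q ((2 * j + 1) * 2 ^ m) ∈ Algebra.adjoin ℝ {Q (2 ^ s) ^ 2} :=
    Bpoly_mem _ fun t ht => hS t (hsm.trans_le (le_of_testBit_odd_mul_two_pow ht))
  rw [hB, mul_assoc]
  exact hodd s _ (mul_mem hg hB')

end Bits

theorem stmt_12 (γ : ℕ → ℝ) (hγ : ∀ s : ℕ, 0 < γ (s + 1) ∧ γ (s + 1) < 1 / 4)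
    (μ : Measure ℝ) [IsProbabilityMeasure μ]
    (hμint : ∀ p : Polynomial ℝ, Integrable (fun x => p.eval x) μ)
    (hμpos : ∀ p : Polynomial ℝ, p ≠ 0 → 0 < ∫ x, (p.eval x) ^ 2 ∂μ)
    (hμconv : ∀ p : Polynomial ℝ,
      Tendsto (fun s => nuInt γ s (fun x => p.eval x)) atTop (nhds (∫ x, p.eval x ∂μ)))
    (Q : ℕ → Polynomial ℝ) (hQmonic : ∀ n, (Q n).Monic) (hQdeg : ∀ n, (Q n).natDegree = n)
    (hQorth : ∀ n : ℕ, ∀ p : Polynomial ℝ, p.degree < (n : WithBot ℕ) →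
      ∫ x, (Q n).eval x * p.eval x ∂μ = 0)
 :
    (∀ j k m s : ℕ, s ≠ m →
      ∫ x, (Bpoly Q ((2 * k + 1) * 2 ^ s)).eval x * (Bpoly Q ((2 * j + 1) * 2 ^ m)).eval x ∂μ
        = 0) ∧
    (∀ n : ℕ, 1 ≤ n →
      ∫ x, ((Bpoly Q n).eval x) ^ 2 ∂μ =
        ∏ k ∈ Finset.range n,
          if Nat.testBit n k then ∫ x, ((Q (2 ^ k)).eval x) ^ 2 ∂μ else 1) := by
  have hQ := Q_two_pow_eq hγ hμint hμpos hμconv hQmonic hQdeg hQorth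
  have hsq := Q_two_pow_sq_eq_add_C hQ
  have hodd s g (hg : g ∈ Algebra.adjoin ℝ {Q (2 ^ s) ^ 2}) :=
    integral_Q_two_pow_mul_eq_zero_of_mem_adjoin hγ hμconv (hQ s) hg
  refine ⟨fun j k m s hsm => ?_, fun n _ => ?_⟩
  · simp only [← eval_mul]
    rcases hsm.lt_or_gt with hsm | hms
    · exact integral_Bpoly_mul_Bpoly_eq_zero hsq hodd hsm
    · rw [mul_comm (Bpoly Q _)]
      exact integral_Bpoly_mul_Bpoly_eq_zero hsq hodd hms
  · rw [← Finset.prod_filter, ← integral_sq_prod_Q_two_pow hμint hQorth hQmonic hQdeg hsq,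
      Bpoly_eq_prod_filter]
    simp only [eval_pow]
end
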